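/- The determinant of the Lax matrix ℒ(u) = [[−p₁ − q₂p₂/u, u − 2q₁ − q₂²/u],[p₂²/u, p₁ + q₂p₂/u]] satisfies −det ℒ(u) = h² + ef, and its expansion in u generates the first integrals: h(u)² + e(u)f(u) = p₁² + p₂² − (2/u)(q₁p₂² − q₂p₁p₂); in particular the coefficient of u⁰ equals 2H₁ = p₁²+p₂² and the coefficient of u⁻¹ equals −2(q₁p₂² − q₂p₁p₂) = −2H₂, and {H₁, H₂} = 0 for the canonical bracket. -/

import Mathlib

/-- Partial derivative along the `i`-th coordinate on `ℝⁿ`. -/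
noncomputable def pd {n : ℕ} (i : Fin n) (F : (Fin n → ℝ) → ℝ) (x : Fin n → ℝ) : ℝ :=
  deriv (fun t => F (Function.update x i t)) (x i)

/-- Canonical Poisson bracket on `ℝ⁴` with coordinates `(q₁,q₂,p₁,p₂)`. -/
noncomputable def brCan (F G : (Fin 4 → ℝ) → ℝ) (x : Fin 4 → ℝ) : ℝ :=
  pd 0 F x * pd 2 G x + pd 1 F x * pd 3 G x
    - pd 2 F x * pd 0 G x - pd 3 F x * pd 1 G x

/-- `H₁ = (1/2)(p₁² + p₂²)`. -/
noncomputable def H1can (x : Fin 4 → ℝ) : ℝ := (1 / 2) * ((x 2) ^ 2 + (x 3) ^ 2)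

/-- `H₂ = q₁p₂² - q₂p₁p₂`, the integral associated with parabolic Killing tensor. -/
noncomputable def H2can (x : Fin 4 → ℝ) : ℝ := x 0 * (x 3) ^ 2 - x 1 * x 2 * x 3

lemma pd_H1 (x : Fin 4 → ℝ) :
    pd 0 H1can x = 0 ∧ pd 1 H1can x = 0 ∧ pd 2 H1can x = x 2 ∧ pd 3 H1can x = x 3 := by
  refine ⟨?_, ?_, ?_, ?_⟩ <;>
  · simp only [pd, H1can, Function.update_apply]
    norm_num [Fin.ext_iff, show ((3:Fin 4) : ℕ) = 3 from rfl, show ((2:Fin 4) : ℕ) = 2 from rfl,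
      show ((1:Fin 4) : ℕ) = 1 from rfl, show ((0:Fin 4) : ℕ) = 0 from rfl]
    try ring

lemma pd_H2 (x : Fin 4 → ℝ) :
    pd 0 H2can x = (x 3) ^ 2 ∧ pd 1 H2can x = -(x 2 * x 3) ∧
    pd 2 H2can x = -(x 1 * x 3) ∧ pd 3 H2can x = 2 * x 0 * x 3 - x 1 * x 2 := by
  refine ⟨?_, ?_, ?_, ?_⟩ <;>
  · simp only [pd, H2can, Function.update_apply]
    norm_num [Fin.ext_iff, show ((3:Fin 4) : ℕ) = 3 from rfl, show ((2:Fin 4) : ℕ) = 2 from rfl,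
      show ((1:Fin 4) : ℕ) = 1 from rfl, show ((0:Fin 4) : ℕ) = 0 from rfl] <;>
    first
    | rfl
    | · have h : HasDerivAt (fun t : ℝ => x 0 * x 3 ^ 2 - x 1 * t * x 3) (-(x 1 * x 3)) (x 2) := by
          simpa using (HasDerivAt.const_sub (x 0 * x 3 ^ 2)
            (((hasDerivAt_id (x 2)).const_mul (x 1)).mul_const (x 3)))
        rw [h.deriv]
    | · have h : HasDerivAt (fun t : ℝ => x 0 * t ^ 2 - x 1 * x 2 * t)
            (2 * x 0 * x 3 - x 1 * x 2) (x 3) := by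
          have := ((hasDerivAt_pow 2 (x 3)).const_mul (x 0)).sub
            ((hasDerivAt_id (x 3)).const_mul (x 1 * x 2))
          refine this.congr_deriv ?_
          push_cast; ring
        rw [h.deriv]

/-- `-det ℒ(u) = h² + ef`; its expansion in `u` generates the first integrals:
`h² + ef = p₁² + p₂² - 2(q₁p₂² - q₂p₁p₂)/u = 2H₁ - 2H₂/u`; and `{H₁, H₂} = 0`
for the canonical bracket. -/
theorem lax_determinant_generates_integrals :
    (∀ q1 q2 p1 p2 u : ℝ, u ≠ 0 →
      (let h := -p1 - q2 * p2 / u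
       let e := u - 2 * q1 - q2 ^ 2 / u
       let f := p2 ^ 2 / u
       Matrix.det !![h, e; f, -h] = -(h ^ 2 + e * f) ∧
       h ^ 2 + e * f = p1 ^ 2 + p2 ^ 2 - 2 * (q1 * p2 ^ 2 - q2 * p1 * p2) / u)) ∧
    (∀ x : Fin 4 → ℝ, brCan H1can H2can x = 0) := by
  constructor
  · intro q1 q2 p1 p2 u hu
    constructor
    · simp [Matrix.det_fin_two_of]; ring
    · field_simp; ring
  · intro x
    obtain ⟨a0, a1, a2, a3⟩ := pd_H1 x
    obtain ⟨b0, b1, b2, b3⟩ := pd_H2 x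
    simp [brCan, a0, a1, a2, a3, b0, b1, b2, b3]; ring
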